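/- Let p < d with d not a power of p. Let k be the largest integer with p^k < d, let ℓ be the largest integer with p^ℓ ∣ d, and write d = a p^k + b with integers 1 ≤ a < p and 1 ≤ b < p^k. Let α ∈ K satisfy α^{d−1} = d^d / ((−a p^k)^{a p^k} b^b) and set f(z) = z^b (z − α)^{a p^k}. Then f ∈ P_d; the critical points of f are among α, (b/d)α, and 0; moreover f((b/d)α) = α, f(α) = 0, and f(0) = 0, so every critical point of f has finite forward orbit (f is post-critically finite, hence PCB); and |α| = p^{a(k−ℓ)p^k/(d−1)}. -/

import Mathlib

open Polynomial

/-! With `A = a p^k` and `d = A + b`, `f' = z^(b-1) (z - α)^(A-1) (d z - b α)`, so the critical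
points lie in `{0, α, bα/d}`. This set is forward invariant: `0` and `α` map to `0`, and
`f(bα/d) = b^b (-A)^A d^(-d) α^d`, which the normalisation of `α^(d-1)` makes equal to `α`.
For the norm, `v_p(A) = k` while `v_p(b) = v_p(d) = ℓ < k` (as `0 < b < p^k`), so
`|α|^(d-1) = |d|^d / (|A|^A |b|^b) = p^((k-ℓ)A)`. -/

section Polynomial

variable {R : Type*} [CommRing R] (α : R) (b A : ℕ)

theorem monic_X_pow_mul_X_sub_C_pow : (X ^ b * (X - C α) ^ A : R[X]).Monic :=
  (monic_X_pow b).mul ((monic_X_sub_C α).pow A)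

theorem natDegree_X_pow_mul_X_sub_C_pow [Nontrivial R] :
    (X ^ b * (X - C α) ^ A : R[X]).natDegree = b + A := by
  rw [(monic_X_pow b).natDegree_mul ((monic_X_sub_C α).pow A), natDegree_X_pow,
    (monic_X_sub_C α).natDegree_pow, natDegree_X_sub_C, mul_one]

variable {b A}

theorem derivative_X_pow_mul_X_sub_C_pow (hb : b ≠ 0) (hA : A ≠ 0) :
    derivative (X ^ b * (X - C α) ^ A : R[X]) =
      X ^ (b - 1) * (X - C α) ^ (A - 1) * (C ((b + A : ℕ) : R) * X - C (b * α)) := by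
  obtain ⟨b, rfl⟩ := Nat.exists_eq_add_one_of_ne_zero hb
  obtain ⟨A, rfl⟩ := Nat.exists_eq_add_one_of_ne_zero hA
  simp only [derivative_mul, derivative_pow, derivative_sub, derivative_X,
    derivative_C, Nat.add_sub_cancel, map_natCast, map_mul]
  push_cast
  ring

end Polynomial

section Field

variable {K : Type*} [Field K] [CharZero K] {α : K} {b A d : ℕ}

theorem eval_div_mul_X_pow_mul_X_sub_C_pow (hb : b ≠ 0) (hA : A ≠ 0) (hd : b + A = d)
    (hα : α ^ (d - 1) = (d : K) ^ d / ((-(A : K)) ^ A * (b : K) ^ b)) :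
    (X ^ b * (X - C α) ^ A).eval ((b / d : K) * α) = α := by
  have hd0 : (d : K) ≠ 0 := by exact_mod_cast (show d ≠ 0 by omega)
  have hAK : (-(A : K)) ^ A ≠ 0 := by simp [hA]
  have hbK : (b : K) ^ b ≠ 0 := by simp [hb]
  have hsub : (b / d : K) * α - α = -(A : K) / d * α := by
    field_simp; rw [← hd, Nat.cast_add]; ring
  calc (X ^ b * (X - C α) ^ A).eval ((b / d : K) * α)
      = (b : K) ^ b * (-(A : K)) ^ A / (d : K) ^ d * (α * α ^ (d - 1)) := by
        have hpow (x : K) : x ^ d = x ^ b * x ^ A := by rw [← hd, pow_add]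
        rw [← pow_succ', Nat.sub_add_cancel (by omega), hpow, hpow]
        simp only [eval_mul, eval_pow, eval_X, eval_sub, eval_C, hsub, mul_pow, div_pow]
        field_simp
    _ = α := by rw [hα]; field_simp

theorem eq_of_eval_derivative_X_pow_mul_X_sub_C_pow_eq_zero (hb : b ≠ 0) (hA : A ≠ 0)
    (hd : b + A = d) {c : K} (hc : (derivative (X ^ b * (X - C α) ^ A)).eval c = 0) :
    c = α ∨ c = (b / d : K) * α ∨ c = 0 := by
  have hd0 : (d : K) ≠ 0 := by exact_mod_cast (show d ≠ 0 by omega)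
  rw [derivative_X_pow_mul_X_sub_C_pow α hb hA, hd] at hc
  simp only [eval_mul, eval_pow, eval_X, eval_sub, eval_C, mul_eq_zero, pow_eq_zero_iff',
    sub_eq_zero] at hc
  rcases hc with ((⟨hc, -⟩ | ⟨hc, -⟩) | hc)
  · exact Or.inr (Or.inr hc)
  · exact Or.inl hc
  · exact Or.inr (Or.inl (by field_simp; linear_combination hc))

theorem mapsTo_eval_X_pow_mul_X_sub_C_pow (hb : b ≠ 0) (hA : A ≠ 0) (hd : b + A = d)
    (hα : α ^ (d - 1) = (d : K) ^ d / ((-(A : K)) ^ A * (b : K) ^ b)) :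
    Set.MapsTo (fun z => (X ^ b * (X - C α) ^ A).eval z)
      {α, (b / d : K) * α, 0} {α, (b / d : K) * α, 0} := by
  rintro z (rfl | rfl | rfl) <;> simp [hA, hb, eval_div_mul_X_pow_mul_X_sub_C_pow hb hA hd hα]

end Field

theorem Set.Finite.range_iterate_of_mapsTo {X : Type*} {g : X → X} {s : Set X} (hs : s.Finite)
    (hg : Set.MapsTo g s s) {x : X} (hx : x ∈ s) : (Set.range fun n : ℕ => g^[n] x).Finite :=
  hs.subset (Set.range_subset_iff.2 fun n => hg.iterate n hx)

theorem exists_forall_norm_le_of_finite_range {ι E : Type*} [SeminormedAddGroup E] {u : ι → E}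
    (h : (Set.range u).Finite) : ∃ B : ℝ, ∀ i, ‖u i‖ ≤ B :=
  let ⟨B, hB⟩ := isBounded_iff_forall_norm_le.1 h.isBounded
  ⟨B, fun i => hB _ (Set.mem_range_self i)⟩

section Valuation

theorem lt_of_pow_dvd_mul_pow_add {p a b k l : ℕ} (h : p ^ l ∣ a * p ^ k + b) (hb : b ≠ 0)
    (hbk : b < p ^ k) : l < k := by
  by_contra! hkl
  have hdvd : p ^ k ∣ b := (Nat.dvd_add_right (dvd_mul_left _ _)).1 ((pow_dvd_pow p hkl).trans h)
  exact absurd (Nat.le_of_dvd (Nat.pos_of_ne_zero hb) hdvd) (not_le.2 hbk)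

variable {p : ℕ} [Fact p.Prime]

theorem padicValNat_eq_of_pow_dvd_of_not_pow_succ_dvd {n l : ℕ} (hn : n ≠ 0) (h : p ^ l ∣ n)
    (h' : ¬ p ^ (l + 1) ∣ n) : padicValNat p n = l :=
  le_antisymm (not_lt.1 fun hlt => h' ((padicValNat_dvd_iff_le hn).2 hlt))
    ((padicValNat_dvd_iff_le hn).1 h)

theorem padicValNat_mul_pow_of_not_dvd {a : ℕ} (ha : ¬ p ∣ a) (k : ℕ) :
    padicValNat p (a * p ^ k) = k := by
  rw [padicValNat.mul (by rintro rfl; exact ha (dvd_zero p)) (pow_ne_zero _ (NeZero.ne p)),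
    padicValNat.eq_zero_of_not_dvd ha, padicValNat.prime_pow, zero_add]

theorem padicValNat_eq_of_mul_pow_add {a b k l : ℕ} (h : p ^ l ∣ a * p ^ k + b)
    (h' : ¬ p ^ (l + 1) ∣ a * p ^ k + b) (hb : b ≠ 0) (hbk : b < p ^ k) : padicValNat p b = l := by
  have hlk := lt_of_pow_dvd_mul_pow_add h hb hbk
  have hdvd_iff {m : ℕ} (hm : m ≤ k) : p ^ m ∣ a * p ^ k + b ↔ p ^ m ∣ b :=
    Nat.dvd_add_right (dvd_mul_of_dvd_right (pow_dvd_pow p hm) a)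
  exact padicValNat_eq_of_pow_dvd_of_not_pow_succ_dvd hb ((hdvd_iff hlk.le).1 h)
    (mt (hdvd_iff hlk).2 h')

end Valuation

theorem Real.eq_rpow_div_of_pow_eq {x q : ℝ} (hx : 0 ≤ x) (hq : 0 ≤ q) {m n : ℕ} (hn : n ≠ 0)
    (h : x ^ n = q ^ m) : x = q ^ ((m : ℝ) / n) := by
  rw [← Real.pow_rpow_inv_natCast hx hn, h, ← Real.rpow_natCast, ← Real.rpow_mul hq,
    div_eq_mul_inv]

section Norm

variable {K : Type*} [NormedField K] {p : ℕ}

theorem charZero_of_norm_ratCast_eq_padicNorm [Fact p.Prime]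
    (hext : ∀ q : ℚ, ‖(q : K)‖ = padicNorm p q) : CharZero K :=
  charZero_of_inj_zero fun n hn => by
    have h := hext n
    rw [Rat.cast_natCast, hn, norm_zero] at h
    exact Nat.cast_eq_zero.1 <|
      padicNorm.zero_of_padicNorm_eq_zero (p := p) (by exact_mod_cast h.symm)

theorem norm_natCast_eq_inv_pow_padicValNat (hext : ∀ q : ℚ, ‖(q : K)‖ = padicNorm p q)
    {n : ℕ} (hn : n ≠ 0) : ‖(n : K)‖ = ((p : ℝ) ^ padicValNat p n)⁻¹ := by
  rw [← Rat.cast_natCast, hext, padicNorm.eq_zpow_of_nonzero (by exact_mod_cast hn),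
    padicValRat.of_nat]
  simp

theorem norm_pow_eq_of_pow_eq [Fact p.Prime] (hext : ∀ q : ℚ, ‖(q : K)‖ = padicNorm p q) {α : K}
    {A b d k l : ℕ} (hb : b ≠ 0) (hA : A ≠ 0) (hd : b + A = d)
    (hα : α ^ (d - 1) = (d : K) ^ d / ((-(A : K)) ^ A * (b : K) ^ b))
    (hvA : padicValNat p A = k) (hvb : padicValNat p b = l) (hvd : padicValNat p d = l)
    (hlk : l ≤ k) : ‖α‖ ^ (d - 1) = (p : ℝ) ^ ((k - l) * A) := by
  rw [← norm_pow, hα, norm_div, norm_mul, norm_pow, norm_pow, norm_pow, norm_neg,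
    norm_natCast_eq_inv_pow_padicValNat hext hA, norm_natCast_eq_inv_pow_padicValNat hext hb,
    norm_natCast_eq_inv_pow_padicValNat hext (by omega), hvA, hvb, hvd]
  obtain ⟨m, rfl⟩ := Nat.exists_eq_add_of_le hlk
  subst hd
  have hp : (p : ℝ) ≠ 0 := by exact_mod_cast (NeZero.ne p)
  simp only [Nat.add_sub_cancel_left, inv_pow, ← pow_mul]
  field_simp
  ring

end Norm

theorem stmt_5_general (K : Type*) [NormedField K]
    (p : ℕ) (hp : p.Prime)
    (hext : ∀ q : ℚ, ‖(q : K)‖ = (padicNorm p q : ℝ))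
    (d : ℕ) (k : ℕ) (l : ℕ) (hl1 : p ^ l ∣ d) (hl2 : ¬ p ^ (l + 1) ∣ d)
    (a b : ℕ) (ha1 : 1 ≤ a) (ha2 : a < p) (hb1 : 1 ≤ b) (hb2 : b < p ^ k)
    (hd : d = a * p ^ k + b)
    (α : K)
    (hα : α ^ (d - 1) =
      (d : K) ^ d / ((-((a : K) * (p : K) ^ k)) ^ (a * p ^ k) * (b : K) ^ b))
    (f : K[X]) (hf : f = X ^ b * (X - C α) ^ (a * p ^ k)) :
    (f.Monic ∧ f.natDegree = d ∧ f.eval 0 = 0) ∧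
    (∀ c : K, f.derivative.eval c = 0 →
      c = α ∨ c = ((b : K) / (d : K)) * α ∨ c = 0) ∧
    (f.eval (((b : K) / (d : K)) * α) = α ∧ f.eval α = 0 ∧ f.eval 0 = 0) ∧
    (∀ c : K, f.derivative.eval c = 0 →
      (Set.range fun n : ℕ => (fun z => f.eval z)^[n] c).Finite) ∧
    (∀ c : K, f.derivative.eval c = 0 →
      ∃ B : ℝ, ∀ n : ℕ, ‖(fun z => f.eval z)^[n] c‖ ≤ B) ∧
    ‖α‖ = (p : ℝ) ^ ((a : ℝ) * ((k : ℝ) - (l : ℝ)) * (p : ℝ) ^ k / ((d : ℝ) - 1)) := by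
  have : Fact p.Prime := ⟨hp⟩
  have := charZero_of_norm_ratCast_eq_padicNorm hext
  set A := a * p ^ k with hA
  have hb0 : b ≠ 0 := by omega
  have hA0 : A ≠ 0 := Nat.mul_ne_zero (by omega) (pow_ne_zero _ hp.ne_zero)
  have hbA : b + A = d := by omega
  rw [show -((a : K) * (p : K) ^ k) = -(A : K) by rw [hA]; push_cast; ring] at hα
  subst hf
  have hcrit (c : K) (hc : (derivative (X ^ b * (X - C α) ^ A)).eval c = 0) :=
    eq_of_eval_derivative_X_pow_mul_X_sub_C_pow_eq_zero hb0 hA0 hbA hc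
  have hfin (c : K) (hc : (derivative (X ^ b * (X - C α) ^ A)).eval c = 0) :=
    (Set.toFinite _).range_iterate_of_mapsTo
      (mapsTo_eval_X_pow_mul_X_sub_C_pow hb0 hA0 hbA hα) (hcrit c hc)
  have hlk := lt_of_pow_dvd_mul_pow_add (hd ▸ hl1) hb0 hb2
  have hnorm := norm_pow_eq_of_pow_eq hext hb0 hA0 hbA hα
    (padicValNat_mul_pow_of_not_dvd (Nat.not_dvd_of_pos_of_lt ha1 ha2) k)
    (padicValNat_eq_of_mul_pow_add (hd ▸ hl1) (hd ▸ hl2) hb0 hb2)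
    (padicValNat_eq_of_pow_dvd_of_not_pow_succ_dvd (by omega) hl1 hl2) hlk.le
  refine ⟨⟨monic_X_pow_mul_X_sub_C_pow α b A, by rw [natDegree_X_pow_mul_X_sub_C_pow, hbA],
      by simp [hb0]⟩,
    hcrit, ⟨eval_div_mul_X_pow_mul_X_sub_C_pow hb0 hA0 hbA hα, by simp [hA0], by simp [hb0]⟩,
    hfin, fun c hc => exists_forall_norm_le_of_finite_range (hfin c hc), ?_⟩
  rw [Real.eq_rpow_div_of_pow_eq (norm_nonneg α) (Nat.cast_nonneg p) (by omega) hnorm]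
  congr 1
  rw [hA]
  push_cast [Nat.cast_sub hlk.le, Nat.cast_sub (show 1 ≤ d by omega)]
  ring

/-- Let `p < d` with `d` not a power of `p`, `k` the largest integer
with `p^k < d`, `ℓ` the largest integer with `p^ℓ ∣ d`, and `d = a p^k + b` with
`1 ≤ a < p`, `1 ≤ b < p^k`. Let `α^(d-1) = d^d/((-a p^k)^(a p^k) b^b)` and
`f(z) = z^b (z-α)^(a p^k)`. Then `f ∈ P_d`; the critical points of `f` are among
`α`, `(b/d)α`, `0`; `f((b/d)α) = α`, `f(α) = 0`, `f(0) = 0`, so every critical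
point has finite forward orbit (hence `f` is PCB); and `|α| = p^(a(k-ℓ)p^k/(d-1))`. -/
theorem stmt_5 (K : Type*) [NormedField K] [IsAlgClosed K] [CompleteSpace K]
    (hna : IsNonarchimedean (fun x : K => ‖x‖))
    (p : ℕ) (hp : p.Prime)
    (hext : ∀ q : ℚ, ‖(q : K)‖ = (padicNorm p q : ℝ))
    (d : ℕ) (hpd : p < d) (hnotpow : ¬ ∃ n : ℕ, d = p ^ n)
    (k : ℕ) (hk1 : p ^ k < d) (hk2 : d ≤ p ^ (k + 1))
    (l : ℕ) (hl1 : p ^ l ∣ d) (hl2 : ¬ p ^ (l + 1) ∣ d)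
    (a b : ℕ) (ha1 : 1 ≤ a) (ha2 : a < p) (hb1 : 1 ≤ b) (hb2 : b < p ^ k)
    (hd : d = a * p ^ k + b)
    (α : K)
    (hα : α ^ (d - 1) =
      (d : K) ^ d / ((-((a : K) * (p : K) ^ k)) ^ (a * p ^ k) * (b : K) ^ b))
    (f : K[X]) (hf : f = X ^ b * (X - C α) ^ (a * p ^ k)) :
    (f.Monic ∧ f.natDegree = d ∧ f.eval 0 = 0) ∧
    (∀ c : K, f.derivative.eval c = 0 →
      c = α ∨ c = ((b : K) / (d : K)) * α ∨ c = 0) ∧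
    (f.eval (((b : K) / (d : K)) * α) = α ∧ f.eval α = 0 ∧ f.eval 0 = 0) ∧
    (∀ c : K, f.derivative.eval c = 0 →
      (Set.range fun n : ℕ => (fun z => f.eval z)^[n] c).Finite) ∧
    (∀ c : K, f.derivative.eval c = 0 →
      ∃ B : ℝ, ∀ n : ℕ, ‖(fun z => f.eval z)^[n] c‖ ≤ B) ∧
    ‖α‖ = (p : ℝ) ^ ((a : ℝ) * ((k : ℝ) - (l : ℝ)) * (p : ℝ) ^ k / ((d : ℝ) - 1)) :=
  stmt_5_general K p hp hext d k l hl1 hl2 a b ha1 ha2 hb1 hb2 hd α hα f hf
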